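/- Let n ≥ 2, 1 = μ₁ < μ₂ < … < μ_n, η > 0, i₀ ∈ {1,…,n-1}. Suppose s₁,…,s_n ≥ 0 are not all zero, u = Σᵢ sᵢ, v = Σᵢ sᵢ/μᵢ, and u/v ≤ μ_{i₀+1} - η. Then there is a constant c > 0 depending only on η and μ₁,…,μ_n such that s₁ + … + s_{i₀} ≥ c · u. -/
import Mathlib


theorem stmt_11 (n : ℕ) (hn : 2 ≤ n) (μ : Fin n → ℝ)
    (hμ1 : μ ⟨0, by omega⟩ = 1) (hmono : StrictMono μ)
    (η : ℝ) (hη : 0 < η) (i0 : ℕ) (hi01 : 1 ≤ i0) (hi0n : i0 ≤ n - 1) :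
    ∃ c > 0, ∀ s : Fin n → ℝ, (∀ i, 0 ≤ s i) → s ≠ 0 →
      (∑ i, s i) / (∑ i, s i / μ i) ≤ μ ⟨i0, by omega⟩ - η →
      c * (∑ i, s i) ≤ ∑ i ∈ Finset.univ.filter (fun i : Fin n => (i : ℕ) < i0), s i := by
  set M : ℝ := μ ⟨i0, by omega⟩ with hMdef
  have hM : 1 < M := by
    rw [← hμ1]
    exact hmono (by simp [Fin.lt_def]; omega)
  have hMpos : 0 < M := by linarith
  refine ⟨min 1 (η / ((M - 1) * M)), lt_min one_pos (div_pos hη (by nlinarith)), ?_⟩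
  intro s hs hs0 hratio
  have hμ1le : ∀ i, 1 ≤ μ i := by
    intro i
    rw [← hμ1]
    exact hmono.monotone (by simp [Fin.le_def])
  have hμpos : ∀ i, 0 < μ i := fun i => lt_of_lt_of_le one_pos (hμ1le i)
  set u : ℝ := ∑ i, s i with hudef
  set L : ℝ := ∑ i ∈ Finset.univ.filter (fun i : Fin n => (i : ℕ) < i0), s i with hLdef
  have hu : 0 < u := by
    obtain ⟨j, hj⟩ : ∃ j, s j ≠ 0 := by
      by_contra h; push_neg at h; exact hs0 (funext h)
    exact Finset.sum_pos' (fun i _ => hs i)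
      ⟨j, Finset.mem_univ j, (hs j).lt_of_ne (Ne.symm hj)⟩
  set v : ℝ := ∑ i, s i / μ i with hvdef
  have hv : 0 < v := by
    obtain ⟨j, hj⟩ : ∃ j, s j ≠ 0 := by
      by_contra h; push_neg at h; exact hs0 (funext h)
    exact Finset.sum_pos' (fun i _ => div_nonneg (hs i) (hμpos i).le)
      ⟨j, Finset.mem_univ j,
        div_pos ((hs j).lt_of_ne (Ne.symm hj)) (hμpos j)⟩
  have huv : u ≤ (M - η) * v := (div_le_iff₀ hv).mp hratio
  have hMη : 0 < M - η := by
    by_contra h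
    push_neg at h
    nlinarith
  -- split v
  have hsplit : u = L + ∑ i ∈ Finset.univ.filter (fun i : Fin n => ¬ (i : ℕ) < i0), s i := by
    rw [hudef, hLdef, Finset.sum_filter_add_sum_filter_not]
  have hvsplit : v = (∑ i ∈ Finset.univ.filter (fun i : Fin n => (i : ℕ) < i0), s i / μ i)
      + ∑ i ∈ Finset.univ.filter (fun i : Fin n => ¬ (i : ℕ) < i0), s i / μ i := by
    rw [hvdef, Finset.sum_filter_add_sum_filter_not]
  have hv1 : (∑ i ∈ Finset.univ.filter (fun i : Fin n => (i : ℕ) < i0), s i / μ i) ≤ L := by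
    apply Finset.sum_le_sum
    intro i _
    exact div_le_self (hs i) (hμ1le i)
  have hHnn : 0 ≤ ∑ i ∈ Finset.univ.filter (fun i : Fin n => ¬ (i : ℕ) < i0), s i :=
    Finset.sum_nonneg fun i _ => hs i
  have hv2 : (∑ i ∈ Finset.univ.filter (fun i : Fin n => ¬ (i : ℕ) < i0), s i / μ i)
      ≤ (u - L) / M := by
    have : (∑ i ∈ Finset.univ.filter (fun i : Fin n => ¬ (i : ℕ) < i0), s i / μ i)
        ≤ ∑ i ∈ Finset.univ.filter (fun i : Fin n => ¬ (i : ℕ) < i0), s i / M := by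
      apply Finset.sum_le_sum
      intro i hi
      simp only [Finset.mem_filter] at hi
      have hMle : M ≤ μ i := by
        rcases eq_or_lt_of_le (show (⟨i0, by omega⟩ : Fin n) ≤ i by
          simp [Fin.le_def]; omega) with h | h
        · rw [hMdef, h]
        · exact (hmono h).le
      exact div_le_div_of_nonneg_left (hs i) hMpos hMle
    calc _ ≤ _ := this
      _ = (u - L) / M := by
          rw [← Finset.sum_div]
          congr 1
          linarith [hsplit]
  have hLnn : 0 ≤ L := Finset.sum_nonneg fun i _ => hs i
  have key : u ≤ (M - η) * (L + (u - L) / M) := by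
    have : v ≤ L + (u - L) / M := by rw [hvsplit]; linarith
    nlinarith
  have hηu : η * u ≤ (M - 1) * M * L := by
    have hMne : (M : ℝ) ≠ 0 := ne_of_gt hMpos
    have h2 : M * u ≤ (M - η) * (M * L + (u - L)) := by
      have h3 : M * ((M - η) * (L + (u - L) / M)) = (M - η) * (M * L + (u - L)) := by
        field_simp
      nlinarith [mul_le_mul_of_nonneg_left key hMpos.le]
    nlinarith [mul_nonneg (mul_nonneg hη.le (by linarith : (0:ℝ) ≤ M - 1)) hLnn]
  have hmin : min 1 (η / ((M - 1) * M)) ≤ η / ((M - 1) * M) := min_le_right _ _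
  have hfin : (η / ((M - 1) * M)) * u ≤ L := by
    rw [div_mul_eq_mul_div, div_le_iff₀ (by nlinarith : (0:ℝ) < (M - 1) * M)]
    nlinarith
  calc min 1 (η / ((M - 1) * M)) * u ≤ (η / ((M - 1) * M)) * u :=
        mul_le_mul_of_nonneg_right hmin hu.le
    _ ≤ L := hfin
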